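/- Refined dissipation inequality, compressible case (Remark (i), Section 2.5): Let n ≥ 1, let D ∈ ℝⁿˣⁿ be symmetric, let d ∈ ℝⁿ with |d| = 1, and let μ_s, μ_b, μ_L, μ_0 ∈ ℝ satisfy μ_s ≥ 0, 2μ_s + μ_L ≥ 0, 2μ_s + μ_0 > 0, and μ_0²/n² ≤ (2μ_s + μ_0)(2μ_s/n + μ_b + μ_0/n²). Then 2μ_s‖D‖² + μ_b(tr D)² + μ_L|P_dDd|² + μ_0⟨Dd,d⟩² ≥ 0. -/

import Mathlib

/-!
Write `t = tr D`, `a = ⟨Dd, d⟩`, `w = |P_d D d|²`. Cauchy–Schwarz for the trace-free part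
`D - (t/n) I` applied to the unit vector `d`, split orthogonally along `d`, gives
`‖D‖² ≥ t²/n + w + (a - t/n)²`. Using this for the `2μ_s`-term, what remains is `(2μ_s + μ_L) w`,
which is nonnegative, plus a binary quadratic form in `(a - t/n, t)` whose discriminant
condition is exactly the hypothesis on `μ₀, μ_b, μ_s`.
-/

open scoped BigOperators
open Matrix

/-- Euclidean inner product on `Fin n → ℝ`. -/
def dotv {n : ℕ} (a b : Fin n → ℝ) : ℝ := ∑ i, a i * b i

/-- Frobenius product `A : B = Σᵢⱼ Aᵢⱼ Bᵢⱼ` of two matrices. -/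
def frob {n : ℕ} (A B : Matrix (Fin n) (Fin n) ℝ) : ℝ := ∑ i, ∑ j, A i j * B i j

theorem quadratic_form_nonneg {A B C : ℝ} (hA : 0 < A) (hdisc : B ^ 2 ≤ A * C) (x y : ℝ) :
    0 ≤ A * x ^ 2 + 2 * B * x * y + C * y ^ 2 := by
  have completed_square : A * (A * x ^ 2 + 2 * B * x * y + C * y ^ 2)
      = (A * x + B * y) ^ 2 + (A * C - B ^ 2) * y ^ 2 := by ring
  refine nonneg_of_mul_nonneg_right ?_ hA
  rw [completed_square]
  have := sub_nonneg.2 hdisc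
  positivity

lemma dotv_eq_dotProduct {n : ℕ} (a b : Fin n → ℝ) : dotv a b = a ⬝ᵥ b := rfl

lemma dotv_self_nonneg {n : ℕ} (v : Fin n → ℝ) : 0 ≤ dotv v v :=
  dotProduct_self_star_nonneg v

lemma frob_eq_trace_mul_transpose {n : ℕ} (A B : Matrix (Fin n) (Fin n) ℝ) :
    frob A B = trace (A * Bᵀ) := by
  simp [frob, trace, mul_apply]

lemma dotv_mulVec_self_le {n : ℕ} (M : Matrix (Fin n) (Fin n) ℝ) (d : Fin n → ℝ) :
    dotv (M *ᵥ d) (M *ᵥ d) ≤ frob M M * dotv d d := by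
  rw [frob, Finset.sum_mul]
  refine Finset.sum_le_sum fun i _ => ?_
  simpa [mulVec, dotProduct, dotv, ← sq] using Finset.sum_mul_sq_le_sq_mul_sq Finset.univ (M i) d

lemma frob_sub_smul_one_self {n : ℕ} (D : Matrix (Fin n) (Fin n) ℝ) (c : ℝ) :
    frob (D - c • 1) (D - c • 1) = frob D D - 2 * c * trace D + n * c ^ 2 := by
  simp only [frob_eq_trace_mul_transpose, transpose_sub, transpose_smul, transpose_one, sub_mul,
    mul_sub, Matrix.smul_mul, Matrix.mul_smul, mul_one, one_mul, smul_smul, trace_sub, trace_smul, trace_one,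
    trace_transpose, Fintype.card_fin, smul_eq_mul]
  ring

lemma dotv_sub_smul_self_of_unit {n : ℕ} {d : Fin n → ℝ} (hd : dotv d d = 1)
    (v : Fin n → ℝ) (c : ℝ) :
    dotv (v - c • d) (v - c • d) = dotv (v - dotv d v • d) (v - dotv d v • d) + (dotv v d - c) ^ 2 := by
  simp only [dotv_eq_dotProduct] at *
  simp only [sub_dotProduct, dotProduct_sub, smul_dotProduct, dotProduct_smul, hd, smul_eq_mul,
    dotProduct_comm d v]
  ring

lemma trace_sq_div_add_le_frob {n : ℕ} (hn : n ≠ 0) (D : Matrix (Fin n) (Fin n) ℝ)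
    {d : Fin n → ℝ} (hd : dotv d d = 1) :
    trace D ^ 2 / n + dotv (D *ᵥ d - dotv d (D *ᵥ d) • d) (D *ᵥ d - dotv d (D *ᵥ d) • d)
      + (dotv (D *ᵥ d) d - trace D / n) ^ 2 ≤ frob D D := by
  have hcs := dotv_mulVec_self_le (D - (trace D / n) • 1) d
  rw [hd, mul_one, frob_sub_smul_one_self, sub_mulVec, smul_mulVec, one_mulVec,
    dotv_sub_smul_self_of_unit hd] at hcs
  have hn' : (n : ℝ) ≠ 0 := Nat.cast_ne_zero.2 hn
  have : 2 * (trace D / n) * trace D - n * (trace D / n) ^ 2 = trace D ^ 2 / n := by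
    field_simp; ring
  linarith

theorem refined_dissipation_compressible_general {n : ℕ} (hn : 1 ≤ n)
    (D : Matrix (Fin n) (Fin n) ℝ)
    (d : Fin n → ℝ) (hd : dotv d d = 1)
    (μs μb μL μ₀ : ℝ) (hμs : 0 ≤ μs) (hμL : 0 ≤ 2*μs + μL) (hμ₀ : 0 < 2*μs + μ₀)
    (hdisc : μ₀^2/(n:ℝ)^2 ≤ (2*μs + μ₀) * (2*μs/(n:ℝ) + μb + μ₀/(n:ℝ)^2))
    (Pd : (Fin n → ℝ) → (Fin n → ℝ)) (hPd : Pd = fun v => v - (dotv d v) • d) :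
    0 ≤ 2*μs * frob D D + μb * (Matrix.trace D)^2
        + μL * dotv (Pd (D.mulVec d)) (Pd (D.mulVec d))
        + μ₀ * (dotv (D.mulVec d) d)^2 := by
  subst hPd
  set t := trace D
  set a := dotv (D *ᵥ d) d
  set w := dotv (D *ᵥ d - dotv d (D *ᵥ d) • d) (D *ᵥ d - dotv d (D *ᵥ d) • d)
  have hF : t ^ 2 / n + w + (a - t / n) ^ 2 ≤ frob D D :=
    trace_sq_div_add_le_frob (by omega) D hd
  have hq := quadratic_form_nonneg hμ₀ (B := μ₀ / n) (by rwa [div_pow]) (a - t / n) t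
  have hw := dotv_self_nonneg (D *ᵥ d - dotv d (D *ᵥ d) • d)
  have decomposition : 2*μs * frob D D + μb * t^2 + μL * w + μ₀ * a^2
      = 2*μs * (frob D D - (t ^ 2 / n + w + (a - t / n) ^ 2)) + (2*μs + μL) * w
        + ((2*μs + μ₀) * (a - t/n)^2 + 2 * (μ₀/n) * (a - t/n) * t
          + (2*μs/n + μb + μ₀/n^2) * t^2) := by ring
  rw [decomposition]
  linarith [mul_nonneg hμs (sub_nonneg.2 hF), mul_nonneg hμL hw]

/-- Refined dissipation inequality in the compressible case: for symmetric `D`, unit `d`,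
and `μ_s ≥ 0`, `2μ_s + μ_L ≥ 0`, `2μ_s + μ₀ > 0`,
`μ₀²/n² ≤ (2μ_s + μ₀)(2μ_s/n + μ_b + μ₀/n²)`, one has
`2μ_s‖D‖² + μ_b(tr D)² + μ_L|P_dDd|² + μ₀⟨Dd,d⟩² ≥ 0`. -/
theorem refined_dissipation_compressible {n : ℕ} (hn : 1 ≤ n)
    (D : Matrix (Fin n) (Fin n) ℝ) (hDsymm : Dᵀ = D)
    (d : Fin n → ℝ) (hd : dotv d d = 1)
    (μs μb μL μ₀ : ℝ) (hμs : 0 ≤ μs) (hμL : 0 ≤ 2*μs + μL) (hμ₀ : 0 < 2*μs + μ₀)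
    (hdisc : μ₀^2/(n:ℝ)^2 ≤ (2*μs + μ₀) * (2*μs/(n:ℝ) + μb + μ₀/(n:ℝ)^2))
    (Pd : (Fin n → ℝ) → (Fin n → ℝ)) (hPd : Pd = fun v => v - (dotv d v) • d) :
    0 ≤ 2*μs * frob D D + μb * (Matrix.trace D)^2
        + μL * dotv (Pd (D.mulVec d)) (Pd (D.mulVec d))
        + μ₀ * (dotv (D.mulVec d) d)^2 :=
  refined_dissipation_compressible_general hn D d hd μs μb μL μ₀ hμs hμL hμ₀ hdisc Pd hPd
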